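/- For every a ∈ F_q*, the Hamming weight of the vector c_4(a) = (tr(a·(b+γ_0)^{-1}), ..., tr(a·(b+γ_{q/2−1})^{-1})) ∈ F_2^{q/2} equals (q + 1 + K(a))/4. -/
import Mathlib


open Finset

/-- The trace map `tr : F_q → F_2 ⊆ F_q`, `tr x = x + x² + ⋯ + x^(2^(r-1))`. -/
def trF {F : Type*} [Field F] (r : ℕ) (x : F) : F :=
  ∑ i ∈ Finset.range r, x ^ (2 ^ i)

/-- The trace map with values in `F_2 = ZMod 2` (the value of `trF` is always `0` or `1`). -/
def tr2 {F : Type*} [Field F] [DecidableEq F] (r : ℕ) (x : F) : ZMod 2 :=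
  if trF r x = 0 then 0 else 1

/-- The canonical additive character `λ(x) = (-1)^(tr x) ∈ ℤ` of `F_q`. -/
def lamF {F : Type*} [Field F] [DecidableEq F] (r : ℕ) (x : F) : ℤ :=
  if trF r x = 0 then 1 else -1

/-- The Kloosterman sum `K(a) = ∑_{α ∈ F_q*} λ(α + a·α⁻¹)`. -/
def Kloos {F : Type*} [Field F] [Fintype F] [DecidableEq F] (r : ℕ) (a : F) : ℤ :=
  ∑ α ∈ Finset.univ.filter (fun α : F => α ≠ 0), lamF r (α + a * α⁻¹)

/-- The Hamming weight of a vector over `F_2`: the number of nonzero coordinates. -/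
def wt {n : ℕ} (u : Fin n → ZMod 2) : ℕ :=
  (Finset.univ.filter (fun l => u l ≠ 0)).card

/-- The vector `(g_1⁻¹, …, g_m⁻¹) ∈ F_q^m`. -/
def invVec {F : Type*} [Field F] {m : ℕ} (g : Fin m → F) : Fin m → F :=
  fun l => (g l)⁻¹

/-- The codeword map `a ↦ (tr(a·v_1), …, tr(a·v_n)) ∈ F_2^n`. -/
def cw {F : Type*} [Field F] [DecidableEq F] (r : ℕ) {n : ℕ} (v : Fin n → F) (a : F) :
    Fin n → ZMod 2 :=
  fun l => tr2 r (a * v l)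

set_option linter.unusedSectionVars false

section aux
open Polynomial
variable {F : Type*} [Field F] [Fintype F] [DecidableEq F]

lemma ringChar_two (r : ℕ) (hr : 0 < r) (hF : Fintype.card F = 2 ^ r) : ringChar F = 2 := by
  have h : ((2 ^ r : ℕ) : F) = 0 := by rw [← hF]; exact FiniteField.cast_card_eq_zero F
  push_cast at h
  have h2 : (2 : F) = 0 := pow_eq_zero_iff hr.ne' |>.mp h
  have hdvd : (ringChar F) ∣ 2 := ringChar.dvd (by exact_mod_cast h2)
  rcases (Nat.prime_two).eq_one_or_self_of_dvd _ hdvd with h1 | h2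
  · exact absurd h1 CharP.ringChar_ne_one
  · exact h2

lemma card_ker_le (r : ℕ) (hr : 0 < r) :
    (Finset.univ.filter (fun β : F => trF r β = 0)).card ≤ 2 ^ (r - 1) := by
  set P : F[X] := ∑ i ∈ Finset.range r, X ^ (2 ^ i) with hP
  have heval : ∀ β : F, P.eval β = trF r β := by
    intro β; simp [hP, trF, eval_finset_sum]
  have hne : P ≠ 0 := by
    intro h
    have hc : P.coeff 1 = 1 := by
      simp only [hP, finset_sum_coeff, coeff_X_pow]
      have : ∀ i ∈ Finset.range r, (if (1 : ℕ) = 2 ^ i then (1:F) else 0)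
          = if i = 0 then 1 else 0 := by
        intro i _
        congr 1
        rw [eq_iff_iff]
        constructor
        · intro h
          by_contra hne
          have : 2 ^ i ≥ 2 := Nat.one_lt_two_pow (by omega : i ≠ 0)
          omega
        · rintro rfl; simp
      rw [Finset.sum_congr rfl this, Finset.sum_ite_eq' (Finset.range r) 0 (fun _ => (1:F))]
      simp [hr]
    rw [h] at hc; simp at hc
  have hdeg : P.natDegree ≤ 2 ^ (r - 1) := by
    apply natDegree_sum_le_of_forall_le
    intro i hi
    rw [Finset.mem_range] at hi
    rw [natDegree_X_pow]
    exact Nat.pow_le_pow_right (by norm_num) (by omega : i ≤ r - 1)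
  have hsub : (Finset.univ.filter (fun β : F => trF r β = 0)) ⊆ P.roots.toFinset := by
    intro β hβ
    rw [Finset.mem_filter] at hβ
    rw [Multiset.mem_toFinset, mem_roots hne]
    show P.eval β = 0
    rw [heval β]; exact hβ.2
  calc (Finset.univ.filter (fun β : F => trF r β = 0)).card
      ≤ P.roots.toFinset.card := Finset.card_le_card hsub
    _ ≤ Multiset.card P.roots := Multiset.toFinset_card_le _
    _ ≤ P.natDegree := card_roots' P
    _ ≤ 2 ^ (r - 1) := hdeg

variable [CharP F 2]

lemma trF_add (r : ℕ) (x y : F) : trF r (x + y) = trF r x + trF r y := by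
  haveI : Fact (Nat.Prime 2) := ⟨Nat.prime_two⟩
  simp only [trF, add_pow_char_pow, Finset.sum_add_distrib]

lemma trF_zero (r : ℕ) : trF r (0 : F) = 0 := by
  simp [trF, zero_pow (pow_ne_zero _ (two_ne_zero))]

lemma trF_sq (r : ℕ) (hF : Fintype.card F = 2 ^ r) (x : F) : trF r (x ^ 2) = trF r x := by
  have hpow : ∀ i : ℕ, (x ^ 2) ^ 2 ^ i = x ^ 2 ^ (i + 1) := fun i => by
    rw [← pow_mul, pow_succ, Nat.mul_comm]
  have h1 : ∑ i ∈ Finset.range (r + 1), x ^ 2 ^ i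
      = x + ∑ i ∈ Finset.range r, x ^ 2 ^ (i + 1) := by
    rw [Finset.sum_range_succ']
    simp [add_comm]
  have h2 : ∑ i ∈ Finset.range (r + 1), x ^ 2 ^ i
      = (∑ i ∈ Finset.range r, x ^ 2 ^ i) + x ^ 2 ^ r := Finset.sum_range_succ _ _
  have h3 : x ^ 2 ^ r = x := by rw [← hF]; exact FiniteField.pow_card x
  have h4 : trF r (x ^ 2) = ∑ i ∈ Finset.range r, x ^ 2 ^ (i + 1) := by
    simp only [trF, hpow]
  have key : x + trF r (x ^ 2) = trF r x + x := by rw [h4, ← h1, h2, h3, trF]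
  have := key.trans (add_comm (trF r x) x)
  exact add_left_cancel this

lemma trF_idem (r : ℕ) (hF : Fintype.card F = 2 ^ r) (x : F) : (trF r x) ^ 2 = trF r x := by
  haveI : Fact (Nat.Prime 2) := ⟨Nat.prime_two⟩
  have : (trF r x) ^ 2 = trF r (x ^ 2) := by
    simp only [trF, sum_pow_char, ← pow_mul, Nat.mul_comm]
  rw [this, trF_sq r hF]

lemma trF_val (r : ℕ) (hF : Fintype.card F = 2 ^ r) (x : F) :
    trF r x = 0 ∨ trF r x = 1 := by
  have h := trF_idem r hF x
  have : trF r x * (trF r x - 1) = 0 := by ring_nf; linear_combination h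
  rcases mul_eq_zero.mp this with h | h
  · exact Or.inl h
  · exact Or.inr (by linear_combination h)

lemma lam_add (r : ℕ) (hF : Fintype.card F = 2 ^ r) (x y : F) :
    lamF r (x + y) = lamF r x * lamF r y := by
  have h2 : (2 : F) = 0 := by exact_mod_cast CharP.cast_eq_zero F 2
  have h11 : (1 : F) + 1 = 0 := by linear_combination h2
  unfold lamF
  rw [trF_add]
  rcases trF_val r hF x with hx | hx <;> rcases trF_val r hF y with hy | hy <;>
    simp [hx, hy, h11]

lemma lam_zero (r : ℕ) : lamF r (0 : F) = 1 := by simp [lamF, trF_zero]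

lemma sum_lam {ι : Type*} [DecidableEq ι] (r : ℕ) (s : Finset ι) (f : ι → F) :
    ∑ i ∈ s, lamF r (f i)
      = (s.card : ℤ) - 2 * ((s.filter fun i => trF r (f i) ≠ 0).card : ℤ) := by
  have hsplit := Finset.card_filter_add_card_filter_not (s := s)
      (p := fun i => trF r (f i) = 0)
  unfold lamF
  rw [Finset.sum_ite, Finset.sum_const, Finset.sum_const]
  simp only [nsmul_eq_mul, mul_one, mul_neg_one, ne_eq]
  have h1 : ((s.filter fun i => trF r (f i) = 0).card : ℤ)
      + ((s.filter fun i => ¬ trF r (f i) = 0).card : ℤ) = (s.card : ℤ) := by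
    exact_mod_cast hsplit
  push_cast
  linarith

end aux

/-- For every `a ∈ F_q*`, the Hamming weight of
`c_4(a) = (tr(a·(b+γ_0)⁻¹), …, tr(a·(b+γ_{q/2−1})⁻¹)) ∈ F_2^(q/2)` equals
`(q + 1 + K(a))/4`, where `b ∈ F_q \ Θ(F_q)` and `γ_0 = 0, γ_1, …, γ_{q/2−1}` enumerate
the elements of `Θ(F_q) = {α² + α : α ∈ F_q}`. -/
theorem weight_c4 {F : Type*} [Field F] [Fintype F] [DecidableEq F]
    (r : ℕ) (hr : 0 < r) (hF : Fintype.card F = 2 ^ r)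
    (b : F) (hb : ∀ α : F, α ^ 2 + α ≠ b)
    (γ : Fin (2 ^ (r - 1)) → F) (hγinj : Function.Injective γ)
    (hγran : Set.range γ = {β : F | ∃ α : F, β = α ^ 2 + α})
    (a : F) (ha : a ≠ 0) :
    (wt (cw r (invVec (fun i => b + γ i)) a) : ℚ)
      = ((2 ^ r : ℚ) + 1 + (Kloos r a : ℚ)) / 4 := by
  classical
  have hchar : ringChar F = 2 := ringChar_two r hr hF
  haveI : CharP F 2 := hchar ▸ ringChar.charP F
  haveI : Fact (Nat.Prime 2) := ⟨Nat.prime_two⟩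
  have h2F : (2 : F) = 0 := by exact_mod_cast CharP.cast_eq_zero F 2
  have h2m : 2 * 2 ^ (r - 1) = 2 ^ r := by
    rw [← pow_succ']
    congr 1
    omega
  set T0 : Finset F := Finset.univ.filter (fun β => trF r β = 0) with hT0
  have htheta : ∀ α : F, trF r (α ^ 2 + α) = 0 := by
    intro α
    rw [trF_add r _ _, trF_sq r hF]
    linear_combination (trF r α) * h2F
  have himsub : Finset.univ.image γ ⊆ T0 := by
    intro β hβ
    simp only [Finset.mem_image] at hβ
    obtain ⟨j, _, rfl⟩ := hβ
    have hmem : γ j ∈ Set.range γ := ⟨j, rfl⟩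
    rw [hγran] at hmem
    obtain ⟨α, hα⟩ := hmem
    simp [hT0, Finset.mem_filter, hα, htheta]
  have hcard_im : (Finset.univ.image γ).card= 2 ^ (r - 1) := by
    rw [Finset.card_image_of_injective _ hγinj, Finset.card_univ, Fintype.card_fin]
  have him : Finset.univ.image γ = T0 := by
    apply Finset.eq_of_subset_of_card_le himsub
    rw [hcard_im]; exact card_ker_le r hr
  have hcardT0 : T0.card= 2 ^ (r - 1) := by rw [← him, hcard_im]
  have htrb : trF r b ≠ 0 := by
    intro h
    have hbT : b ∈ T0 := by simp [hT0, h]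
    rw [← him, Finset.mem_image] at hbT
    obtain ⟨j, _, hj⟩ := hbT
    have hbr : b ∈ Set.range γ := ⟨j, hj⟩
    rw [hγran] at hbr
    obtain ⟨α, hα⟩ := hbr
    exact hb α hα.symm
  have hlamb : lamF r b = -1 := by simp [lamF, htrb]
  -- the full character sum vanishes
  have hsumlam : ∑ v : F, lamF r v = 0 := by
    have h := sum_lam r Finset.univ (fun v : F => v)
    have hcards := Finset.card_filter_add_card_filter_not (s := (Finset.univ : Finset F))
      (p := fun β => trF r β = 0)
    have hcard0 : (Finset.univ.filter (fun β : F => trF r β = 0)).card= 2 ^ (r - 1) := hcardT0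
    have hcardU : (Finset.univ : Finset F).card = 2 ^ r := by rw [Finset.card_univ, hF]
    have hcard1 : (Finset.univ.filter (fun β : F => ¬ trF r β = 0)).card= 2 ^ (r - 1) := by omega
    rw [h, hcardU]
    have : (Finset.univ.filter fun v : F => trF r v ≠ 0).card= 2 ^ (r - 1) := hcard1
    rw [this]
    push_cast
    have : (2:ℤ) * 2 ^ (r - 1) = 2 ^ r := by exact_mod_cast h2m
    linarith
  -- sum A
  have hA : ∑ β : F, lamF r (a * (b + β)⁻¹) = 0 := by
    have h1 : ∑ β : F, lamF r (a * (b + β)⁻¹) = ∑ u : F, lamF r (a * u⁻¹) :=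
      Fintype.sum_equiv (Equiv.addLeft b) _ _ (fun β => rfl)
    have h2 : ∑ u : F, lamF r (a * u⁻¹)
        = lamF r (a * (0:F)⁻¹) + ∑ u ∈ Finset.univ.erase (0:F), lamF r (a * u⁻¹) :=
      (Finset.add_sum_erase _ _ (Finset.mem_univ 0)).symm
    have h3 : ∑ u ∈ Finset.univ.erase (0:F), lamF r (a * u⁻¹)
        = ∑ v ∈ Finset.univ.erase (0:F), lamF r v := by
      apply Finset.sum_nbij' (i := fun u => a * u⁻¹) (j := fun v => a * v⁻¹)
      · intro u hu
        rw [Finset.mem_erase] at hu ⊢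
        exact ⟨mul_ne_zero ha (inv_ne_zero hu.1), Finset.mem_univ _⟩
      · intro v hv
        rw [Finset.mem_erase] at hv ⊢
        exact ⟨mul_ne_zero ha (inv_ne_zero hv.1), Finset.mem_univ _⟩
      · intro u hu
        rw [Finset.mem_erase] at hu
        field_simp
      · intro v hv
        rw [Finset.mem_erase] at hv
        field_simp
      · intro u hu
        rfl
    have h4 : lamF r (a * (0:F)⁻¹) = 1 := by rw [inv_zero, mul_zero, lam_zero]
    have h5 : ∑ v ∈ Finset.univ.erase (0:F), lamF r v = -1 := by
      have h := Finset.add_sum_erase Finset.univ (fun v : F => lamF r v) (Finset.mem_univ 0)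
      simp only [lam_zero, hsumlam] at h
      linarith
    rw [h1, h2, h3, h4, h5]
    ring
  -- sum B
  have hB : ∑ β : F, lamF r β * lamF r (a * (b + β)⁻¹) = -(1 + Kloos r a) := by
    have h1 : ∀ β : F, lamF r β * lamF r (a * (b + β)⁻¹)
        = lamF r (β + a * (b + β)⁻¹) := fun β => (lam_add r hF _ _).symm
    simp only [h1]
    have h2 : ∑ β : F, lamF r (β + a * (b + β)⁻¹)
        = ∑ u : F, lamF r (b + (u + a * u⁻¹)) := by
      apply Fintype.sum_equiv (Equiv.addLeft b)
      intro β
      have : b + (b + β) = β := by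
        rw [← add_assoc]
        linear_combination b * h2F
      show lamF r (β + a * (b + β)⁻¹) = lamF r (b + ((b + β) + a * (b + β)⁻¹))
      rw [← add_assoc, this]
    have h3 : ∀ u : F, lamF r (b + (u + a * u⁻¹)) = lamF r b * lamF r (u + a * u⁻¹) :=
      fun u => lam_add r hF _ _
    rw [h2]
    simp only [h3, hlamb]
    have h6 : ∑ x : F, lamF r (x + a * x⁻¹) = 1 + Kloos r a := by
      have h := Finset.add_sum_erase Finset.univ
        (fun x : F => lamF r (x + a * x⁻¹)) (Finset.mem_univ 0)
      have h0 : lamF r ((0:F) + a * (0:F)⁻¹) = 1 := by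
        rw [inv_zero, mul_zero, add_zero, lam_zero]
      have hK : Kloos r a = ∑ x ∈ Finset.univ.erase (0:F), lamF r (x + a * x⁻¹) := by
        rw [Kloos, Finset.filter_ne']
      rw [hK, ← h]
      simp only [h0]
    simp only [neg_one_mul]
    rw [Finset.sum_neg_distrib, h6]
  -- combine into 2T = -(1+K)
  have h2T : ∑ β : F, (1 + lamF r β) * lamF r (a * (b + β)⁻¹)
      = 2 * ∑ β ∈ T0, lamF r (a * (b + β)⁻¹) := by
    rw [← Finset.sum_filter_add_sum_filter_not Finset.univ (fun β : F => trF r β = 0)]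
    have hz : ∑ β ∈ Finset.univ.filter (fun β : F => ¬ trF r β = 0),
        (1 + lamF r β) * lamF r (a * (b + β)⁻¹) = 0 := by
      apply Finset.sum_eq_zero
      intro β hβ
      rw [Finset.mem_filter] at hβ
      simp [lamF, hβ.2]
    rw [hz, add_zero, Finset.mul_sum]
    apply Finset.sum_congr rfl
    intro β hβ
    rw [Finset.mem_filter] at hβ
    simp only [lamF, if_pos hβ.2]
    ring
  have hT : 2 * ∑ β ∈ T0, lamF r (a * (b + β)⁻¹) = -(1 + Kloos r a) := by
    rw [← h2T]
    have hexp : ∀ β : F, (1 + lamF r β) * lamF r (a * (b + β)⁻¹)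
        = lamF r (a * (b + β)⁻¹) + lamF r β * lamF r (a * (b + β)⁻¹) := fun β => by ring
    simp only [hexp]
    rw [Finset.sum_add_distrib, hA, hB, zero_add]
  have hreidx : ∑ β ∈ T0, lamF r (a * (b + β)⁻¹)
      = ∑ j, lamF r (a * (b + γ j)⁻¹) := by
    rw [← him, Finset.sum_image (fun x _ y _ h => hγinj h)]
  have hwt : (wt (cw r (invVec fun i => b + γ i) a) : ℤ)
      = ((Finset.univ.filter
          (fun j : Fin (2 ^ (r - 1)) => trF r (a * (b + γ j)⁻¹) ≠ 0)).card : ℤ) := by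
    congr 1
    unfold wt cw invVec tr2
    congr 1
    apply Finset.filter_congr
    intro j _
    by_cases h : trF r (a * (b + γ j)⁻¹) = 0 <;> simp [h]
  have hS := sum_lam r Finset.univ (fun j : Fin (2 ^ (r - 1)) => a * (b + γ j)⁻¹)
  rw [Finset.card_univ, Fintype.card_fin] at hS
  have h2mz : (2:ℤ) * 2 ^ (r - 1) = 2 ^ r := by exact_mod_cast h2m
  have hKint : 2 * (((2 ^ (r - 1) : ℕ) : ℤ)
      - 2 * ((Finset.univ.filter
          (fun j : Fin (2 ^ (r - 1)) => trF r (a * (b + γ j)⁻¹) ≠ 0)).card : ℤ))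
      = -(1 + Kloos r a) := by
    rw [← hS, ← hreidx]
    exact hT
  have hfin : (4:ℤ) * (wt (cw r (invVec fun i => b + γ i) a) : ℤ)
      = 2 ^ r + 1 + Kloos r a := by
    push_cast at hKint
    rw [hwt]
    linarith
  rw [eq_div_iff (by norm_num : (4:ℚ) ≠ 0)]
  have : ((4 * (wt (cw r (invVec fun i => b + γ i) a) : ℤ) : ℤ) : ℚ)
      = ((2 ^ r + 1 + Kloos r a : ℤ) : ℚ) := by exact_mod_cast hfin
  push_cast at this
  linarith
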